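/- In the plane ℝ² with the ℓ¹-norm, for x = (1,0) and y = (0,1), we have ∠Thy(x, y) = π/2 but ∠Thy(x, x+y) = ∠Thy(x+y, y) = arccos(3/4); hence ∠Thy(x, x+y) + ∠Thy(x+y, y) ≠ ∠Thy(x, y) (additivity of angles fails). -/

import Mathlib

noncomputable def N1 : ℝ × ℝ → ℝ := fun v => |v.1| + |v.2|

noncomputable def angThy1 (u v : ℝ × ℝ) : ℝ :=
  Real.arccos ((1/4) *
    ((N1 ((N1 u)⁻¹ • u + (N1 v)⁻¹ • v)) ^ 2 - (N1 ((N1 u)⁻¹ • u - (N1 v)⁻¹ • v)) ^ 2))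

open Real

-- `‖e₁ + e₂‖₁ = ‖e₁ - e₂‖₁ = 2`, so the arccos argument is `0`.
lemma angThy1_e1_e2 : angThy1 (1, 0) (0, 1) = π / 2 := by
  norm_num [angThy1, N1]

-- `e₁ + e₂` normalizes to `(1/2, 1/2)`; the sum and difference with `e₁` have `ℓ¹`-norms
-- `2` and `1`, giving `(4 - 1) / 4`.
lemma angThy1_e1_e1_add_e2 : angThy1 (1, 0) ((1, 0) + (0, 1)) = arccos (3 / 4) := by
  norm_num [angThy1, N1, abs_of_pos]

lemma angThy1_e1_add_e2_e2 : angThy1 ((1, 0) + (0, 1)) (0, 1) = arccos (3 / 4) := by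
  norm_num [angThy1, N1, abs_of_pos]

/-- Doubling the angle gives `cos (2 θ) = 2 (3/4)² - 1 = 1/8 ≠ 0 = cos (π/2)`. -/
lemma arccos_three_quarters_add_self_ne : arccos (3 / 4) + arccos (3 / 4) ≠ π / 2 := by
  intro h
  have hcos := congrArg cos h
  rw [← two_mul, cos_two_mul, cos_arccos (by norm_num) (by norm_num), cos_pi_div_two] at hcos
  norm_num at hcos

theorem stmt_8 :
    angThy1 (1, 0) (0, 1) = Real.pi / 2 ∧
    angThy1 (1, 0) ((1, 0) + (0, 1)) = Real.arccos (3/4) ∧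
    angThy1 ((1, 0) + (0, 1)) (0, 1) = Real.arccos (3/4) ∧
    angThy1 (1, 0) ((1, 0) + (0, 1)) + angThy1 ((1, 0) + (0, 1)) (0, 1) ≠
      angThy1 (1, 0) (0, 1) := by
  refine ⟨angThy1_e1_e2, angThy1_e1_e1_add_e2, angThy1_e1_add_e2_e2, ?_⟩
  rw [angThy1_e1_e2, angThy1_e1_e1_add_e2, angThy1_e1_add_e2_e2]
  exact arccos_three_quarters_add_self_ne
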